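/- Fix μ ∈ ℝ and σ > 0. The function c ↦ P(μ, σ, c) is strictly decreasing: if c' < c then P(μ, σ, c') > P(μ, σ, c). -/
import Mathlib


open Real MeasureTheory Filter Topology

/-- Standard normal density φ(x) = exp(-x²/2)/√(2π). -/
noncomputable def stdPdf (x : ℝ) : ℝ := Real.exp (-(x ^ 2) / 2) / Real.sqrt (2 * Real.pi)

/-- Standard normal CDF Φ(x) = ∫_{-∞}^x φ(u) du. -/
noncomputable def stdCdf (x : ℝ) : ℝ := ∫ u in Set.Iio x, stdPdf u

/-- P(μ, σ, c): probability that an agent with prior N(μ, σ²) and link cost c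
is never ostracized (Proposition 1). -/
noncomputable def Pstay (μ σ c : ℝ) : ℝ :=
  ∫ q in Set.Ioi c, (1 - Real.exp (-(2 / σ ^ 2) * (μ - c) * (q - c))) * stdPdf ((q - μ) / σ) / σ

open Set

lemma stdPdf_pos (x : ℝ) : 0 < stdPdf x := by
  unfold stdPdf
  positivity

lemma stdPdf_continuous : Continuous stdPdf := by
  unfold stdPdf
  fun_prop

lemma stdPdf_integrable : Integrable stdPdf := by
  have h : Integrable (fun x : ℝ => Real.exp (-(1 / 2 : ℝ) * x ^ 2) / Real.sqrt (2 * Real.pi)) :=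
    (integrable_exp_neg_mul_sq (by norm_num)).div_const _
  refine h.congr (Filter.Eventually.of_forall fun x => ?_)
  unfold stdPdf
  ring_nf

/-- translation for integrals over `Ioi`. -/
lemma integral_comp_add_right_Ioi (g : ℝ → ℝ) (a d : ℝ) :
    (∫ x in Ioi a, g (x + d)) = ∫ x in Ioi (a + d), g x := by
  rw [← integral_indicator measurableSet_Ioi, ← integral_indicator measurableSet_Ioi,
    ← integral_add_right_eq_self (Set.indicator (Ioi (a + d)) g) d]
  congr 1
  ext x
  by_cases h : a < x <;>
    simp [Set.indicator_apply, mem_Ioi, h, add_lt_add_iff_right]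

/-- affine change of variables for the standard normal density. -/
lemma integral_affine (m σ : ℝ) (hσ : 0 < σ) (c : ℝ) :
    (∫ q in Ioi c, stdPdf ((q - m) / σ) / σ) = ∫ x in Ioi ((c - m) / σ), stdPdf x := by
  have h1 : (∫ q in Ioi c, stdPdf ((q - m) / σ) / σ)
      = ∫ y in Ioi (c - m), stdPdf (y / σ) / σ := by
    have := integral_comp_add_right_Ioi (fun y => stdPdf (y / σ) / σ) c (-m)
    simpa [sub_eq_add_neg] using this
  have h2 : (∫ y in Ioi (c - m), stdPdf (y / σ) / σ)
      = σ⁻¹⁻¹ • ∫ x in Ioi ((c - m) * σ⁻¹), stdPdf (x) / σ := by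
    have := integral_comp_mul_right_Ioi (fun x => stdPdf x / σ) (c - m)
      (b := σ⁻¹) (inv_pos.mpr hσ)
    simpa [div_eq_mul_inv] using this
  rw [h1, h2, inv_inv, integral_div, smul_eq_mul, mul_comm,
    div_mul_cancel₀ _ hσ.ne', div_eq_mul_inv (c - m) σ]

lemma integrable_affine (m σ : ℝ) (hσ : 0 < σ) :
    Integrable (fun q : ℝ => stdPdf ((q - m) / σ) / σ) := by
  have h1 : Integrable (fun q : ℝ => stdPdf (q / σ)) :=
    stdPdf_integrable.comp_div hσ.ne'
  have h2 : Integrable (fun q : ℝ => stdPdf ((q - m) / σ)) :=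
    h1.comp_sub_right m
  exact h2.div_const σ

lemma Gstrict {s t : ℝ} (h : s < t) :
    (∫ x in Ioi t, stdPdf x) < ∫ x in Ioi s, stdPdf x := by
  have hint : IntervalIntegrable stdPdf volume s t :=
    stdPdf_integrable.intervalIntegrable
  have hpos : (0 : ℝ) < ∫ x in s..t, stdPdf x :=
    intervalIntegral.intervalIntegral_pos_of_pos hint stdPdf_pos h
  have hioc : (∫ x in s..t, stdPdf x) = ∫ x in Ioc s t, stdPdf x :=
    intervalIntegral.integral_of_le h.le
  have hsplit : (∫ x in Ioi s, stdPdf x)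
      = (∫ x in Ioc s t, stdPdf x) + ∫ x in Ioi t, stdPdf x := by
    rw [← Ioc_union_Ioi_eq_Ioi h.le,
      setIntegral_union (Ioc_disjoint_Ioi le_rfl) measurableSet_Ioi
        stdPdf_integrable.integrableOn stdPdf_integrable.integrableOn]
  rw [hsplit, ← hioc]
  linarith

lemma pstay_eq (μ σ : ℝ) (hσ : 0 < σ) (c : ℝ) :
    Pstay μ σ c = (∫ x in Ioi ((c - μ) / σ), stdPdf x)
      - ∫ x in Ioi ((μ - c) / σ), stdPdf x := by
  have hpt : ∀ q : ℝ,
      (1 - Real.exp (-(2 / σ ^ 2) * (μ - c) * (q - c))) * stdPdf ((q - μ) / σ) / σ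
        = stdPdf ((q - μ) / σ) / σ - stdPdf ((q - (2 * c - μ)) / σ) / σ := by
    intro q
    have key : Real.exp (-(2 / σ ^ 2) * (μ - c) * (q - c)) * stdPdf ((q - μ) / σ)
        = stdPdf ((q - (2 * c - μ)) / σ) := by
      unfold stdPdf
      rw [mul_div_assoc', ← Real.exp_add]
      congr 1
      field_simp
      ring
    rw [sub_mul, one_mul, key, sub_div]
  have hI1 := integrable_affine μ σ hσ
  have hI2 := integrable_affine (2 * c - μ) σ hσ
  have : Pstay μ σ c = ∫ q in Ioi c,
      (stdPdf ((q - μ) / σ) / σ - stdPdf ((q - (2 * c - μ)) / σ) / σ) := by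
    unfold Pstay
    exact setIntegral_congr_fun measurableSet_Ioi fun q _ => hpt q
  rw [this, integral_sub hI1.integrableOn hI2.integrableOn,
    integral_affine μ σ hσ c, integral_affine (2 * c - μ) σ hσ c]
  have : (c - (2 * c - μ)) / σ = (μ - c) / σ := by ring_nf
  rw [this]

/-- P(μ, σ, c) is strictly decreasing in the link cost c. -/
theorem stmt_3 (μ σ : ℝ) (hσ : 0 < σ) (c c' : ℝ) (hc : c' < c) :
    Pstay μ σ c' > Pstay μ σ c := by
  rw [pstay_eq μ σ hσ c, pstay_eq μ σ hσ c']
  have h1 : (c' - μ) / σ < (c - μ) / σ := by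
    apply div_lt_div_of_pos_right (by linarith) hσ
  have h2 : (μ - c) / σ < (μ - c') / σ := by
    apply div_lt_div_of_pos_right (by linarith) hσ
  have g1 := Gstrict h1
  have g2 := Gstrict h2
  linarith
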